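/- arXiv:2404.00258 — 4 statements merged into one kernel-verified Lean document; each statement's English description precedes it below -/
import Mathlib

section
/- Let s_f, s_g be real numbers. Let f be C¹ on (s_f,∞) with f(s) > 0 and F(s) := ∫_s^∞ dτ/f(τ) < ∞ for all s > s_f, and let g be C¹ on (s_g,∞) with g(s) > 0 and G(s) := ∫_s^∞ dτ/g(τ) < ∞ for all s > s_g. Let 0 < a < b, let v : (a,b) → (s_g,∞) be twice differentiable and satisfy v''(r) + v'(r)/r + g(v(r)) = 0 for all r ∈ (a,b), and let ũ : (a,b) → (s_f,∞) be twice differentiable and satisfy F(ũ(r)) = G(v(r)) for all r ∈ (a,b). Then for all r ∈ (a,b): ũ''(r) + ũ'(r)/r + f(ũ(r)) + (ũ'(r)² / (f(ũ(r))·F(ũ(r)))) · ( g'(v(r))·G(v(r)) − f'(ũ(r))·F(ũ(r)) ) = 0. -/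
/-!
Differentiating `F(ũ) = G(v)` shows that `w := ũ'/f(ũ) = v'/g(v)`, since `F' = -1/f` and
`G' = -1/g`. Differentiating `w` once more along both representations, and eliminating `v''`
with the radial equation for `v`, leaves `ũ'' + ũ'/r + f(ũ) = f(ũ) w² (f'(ũ) - g'(v))`, which is
the correction term of the claim once `G(v)` is replaced by `F(ũ) > 0`.
-/

open MeasureTheory Filter

noncomputable def Fint (f : ℝ → ℝ) (s : ℝ) : ℝ := ∫ τ in Set.Ioi s, 1 / f τ

open Set Topology

theorem hasDerivAt_setIntegral_Ioi {h : ℝ → ℝ} {c s : ℝ} (hint : IntegrableOn h (Ioi c))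
    (hcs : c < s) (hcont : ContinuousAt h s) :
    HasDerivAt (fun t => ∫ τ in Ioi t, h τ) (-h s) s := by
  have hnhds : Ioi c ∈ 𝓝 s := Ioi_mem_nhds hcs
  have hprim : HasDerivAt (fun t => ∫ τ in c..t, h τ) (h s) s :=
    intervalIntegral.integral_hasDerivAt_right
      ((intervalIntegrable_iff_integrableOn_Ioc_of_le hcs.le).2 (hint.mono_set Ioc_subset_Ioi_self))
      (AEStronglyMeasurable.stronglyMeasurableAtFilter_of_mem hint.aestronglyMeasurable hnhds)
      hcont
  have hsplit : (fun t => (∫ τ in Ioi c, h τ) - ∫ τ in c..t, h τ) =ᶠ[𝓝 s]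
      fun t => ∫ τ in Ioi t, h τ := by
    filter_upwards [hnhds] with t ht
    rw [← intervalIntegral.integral_Ioi_sub_Ioi hint ht.le, sub_sub_cancel]
  simpa using ((hasDerivAt_const s _).sub hprim).congr_of_eventuallyEq hsplit.symm

theorem setIntegral_Ioi_pos {h : ℝ → ℝ} {s : ℝ} (hpos : ∀ τ ∈ Ioi s, 0 < h τ)
    (hint : IntegrableOn h (Ioi s)) : 0 < ∫ τ in Ioi s, h τ := by
  rw [setIntegral_pos_iff_support_of_nonneg_ae
    ((ae_restrict_iff' measurableSet_Ioi).mpr (ae_of_all _ fun τ hτ => (hpos τ hτ).le)) hint]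
  calc (0 : ENNReal) < volume (Ioi s) := by simp
    _ ≤ volume (Function.support h ∩ Ioi s) := measure_mono fun τ hτ => ⟨(hpos τ hτ).ne', hτ⟩

section Fint

variable {f : ℝ → ℝ} {s₀ : ℝ}

theorem Fint_hasDerivAt (hf : ContinuousOn f (Ioi s₀)) (hfpos : ∀ s, s₀ < s → 0 < f s)
    (hfint : ∀ s, s₀ < s → IntegrableOn (fun τ => 1 / f τ) (Ioi s)) {s : ℝ} (hs : s₀ < s) :
    HasDerivAt (Fint f) (-(1 / f s)) s := by
  obtain ⟨c, hc, hcs⟩ := exists_between hs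
  exact hasDerivAt_setIntegral_Ioi (hfint c hc) hcs
    (continuousAt_const.div (hf.continuousAt (Ioi_mem_nhds hs)) (hfpos s hs).ne')

theorem Fint_pos (hfpos : ∀ s, s₀ < s → 0 < f s)
    (hfint : ∀ s, s₀ < s → IntegrableOn (fun τ => 1 / f τ) (Ioi s)) {s : ℝ} (hs : s₀ < s) :
    0 < Fint f s :=
  setIntegral_Ioi_pos (fun τ hτ => one_div_pos.mpr (hfpos τ (hs.trans hτ))) (hfint s hs)

end Fint

theorem div_eq_div_of_comp_eventuallyEq {Φ Ψ f g u v : ℝ → ℝ} {x : ℝ}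
    (hΦ : HasDerivAt Φ (-(1 / f (u x))) (u x)) (hΨ : HasDerivAt Ψ (-(1 / g (v x))) (v x))
    (hu : DifferentiableAt ℝ u x) (hv : DifferentiableAt ℝ v x)
    (h : (fun y => Φ (u y)) =ᶠ[𝓝 x] fun y => Ψ (v y)) :
    deriv u x / f (u x) = deriv v x / g (v x) := by
  have := (hΦ.comp x hu.hasDerivAt).unique ((hΨ.comp x hv.hasDerivAt).congr_of_eventuallyEq h)
  simpa [div_eq_inv_mul] using this

theorem hasDerivAt_deriv_div_comp {f u : ℝ → ℝ} {r : ℝ} (hu : DifferentiableAt ℝ u r)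
    (hu' : DifferentiableAt ℝ (deriv u) r) (hf : DifferentiableAt ℝ f (u r)) (hf₀ : f (u r) ≠ 0) :
    HasDerivAt (fun x => deriv u x / f (u x))
      ((deriv (deriv u) r * f (u r) - deriv u r * (deriv f (u r) * deriv u r)) / f (u r) ^ 2) r :=
  hu'.hasDerivAt.div (hf.hasDerivAt.comp r hu.hasDerivAt) hf₀

theorem radial_transform_identity {u₁ u₂ v₁ v₂ f₀ f₁ g₀ g₁ F r : ℝ}
    (hf₀ : f₀ ≠ 0) (hg₀ : g₀ ≠ 0) (hF : F ≠ 0) (h₁ : u₁ / f₀ = v₁ / g₀)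
    (h₂ : (u₂ * f₀ - u₁ * (f₁ * u₁)) / f₀ ^ 2 = (v₂ * g₀ - v₁ * (g₁ * v₁)) / g₀ ^ 2)
    (hv : v₂ + v₁ / r + g₀ = 0) :
    u₂ + u₁ / r + f₀ + u₁ ^ 2 / (f₀ * F) * (g₁ * F - f₁ * F) = 0 := by
  obtain ⟨w, rfl, rfl⟩ : ∃ w, u₁ = f₀ * w ∧ v₁ = g₀ * w :=
    ⟨v₁ / g₀, by rw [← h₁]; field_simp, by field_simp⟩
  have h₂' : u₂ * g₀ - f₀ * g₀ * f₁ * w ^ 2 = v₂ * f₀ - f₀ * g₀ * g₁ * w ^ 2 := by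
    field_simp at h₂
    linear_combination h₂
  have hcorr : (f₀ * w) ^ 2 / (f₀ * F) * (g₁ * F - f₁ * F) = f₀ * w ^ 2 * (g₁ - f₁) := by
    field_simp
  rw [hcorr]
  apply mul_left_cancel₀ hg₀
  linear_combination h₂' + f₀ * hv

theorem stmt0_general (s_f s_g a b : ℝ) (f g v u : ℝ → ℝ)
    (hf : ContDiffOn ℝ 1 f (Set.Ioi s_f))
    (hfpos : ∀ s, s_f < s → 0 < f s)
    (hfint : ∀ s, s_f < s → IntegrableOn (fun τ => 1 / f τ) (Set.Ioi s))
    (hg : ContDiffOn ℝ 1 g (Set.Ioi s_g))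
    (hgpos : ∀ s, s_g < s → 0 < g s)
    (hgint : ∀ s, s_g < s → IntegrableOn (fun τ => 1 / g τ) (Set.Ioi s))
    (hvrange : ∀ r ∈ Set.Ioo a b, s_g < v r)
    (hvdiff : ∀ r ∈ Set.Ioo a b, DifferentiableAt ℝ v r ∧ DifferentiableAt ℝ (deriv v) r)
    (hvode : ∀ r ∈ Set.Ioo a b,
      deriv (deriv v) r + deriv v r / r + g (v r) = 0)
    (hurange : ∀ r ∈ Set.Ioo a b, s_f < u r)
    (hudiff : ∀ r ∈ Set.Ioo a b, DifferentiableAt ℝ u r ∧ DifferentiableAt ℝ (deriv u) r)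
    (huF : ∀ r ∈ Set.Ioo a b, Fint f (u r) = Fint g (v r)) :
    ∀ r ∈ Set.Ioo a b,
      deriv (deriv u) r + deriv u r / r + f (u r)
        + (deriv u r) ^ 2 / (f (u r) * Fint f (u r))
          * (deriv g (v r) * Fint g (v r) - deriv f (u r) * Fint f (u r)) = 0 := by
  have hw : ∀ x ∈ Ioo a b, deriv u x / f (u x) = deriv v x / g (v x) := fun x hx =>
    div_eq_div_of_comp_eventuallyEq
      (Fint_hasDerivAt hf.continuousOn hfpos hfint (hurange x hx))
      (Fint_hasDerivAt hg.continuousOn hgpos hgint (hvrange x hx))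
      (hudiff x hx).1 (hvdiff x hx).1 (eventually_of_mem (isOpen_Ioo.mem_nhds hx) huF)
  intro r hr
  have hfu₀ : f (u r) ≠ 0 := (hfpos _ (hurange r hr)).ne'
  have hgv₀ : g (v r) ≠ 0 := (hgpos _ (hvrange r hr)).ne'
  have hf' := (hf.contDiffAt (Ioi_mem_nhds (hurange r hr))).differentiableAt one_ne_zero
  have hg' := (hg.contDiffAt (Ioi_mem_nhds (hvrange r hr))).differentiableAt one_ne_zero
  have hw' := (hasDerivAt_deriv_div_comp (hudiff r hr).1 (hudiff r hr).2 hf' hfu₀).unique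
    ((hasDerivAt_deriv_div_comp (hvdiff r hr).1 (hvdiff r hr).2 hg' hgv₀).congr_of_eventuallyEq
      (eventually_of_mem (isOpen_Ioo.mem_nhds hr) hw))
  rw [← huF r hr]
  exact radial_transform_identity hfu₀ hgv₀ (Fint_pos hfpos hfint (hurange r hr)).ne' (hw r hr) hw'
    (hvode r hr)

/-- Radial form of the transformation identity (equation (2.1a) of the paper):
if `v` solves the radial equation for `g` and `F(ũ) = G(v)`, then `ũ` solves the
perturbed radial equation for `f`. -/
theorem stmt0 (s_f s_g a b : ℝ) (f g v u : ℝ → ℝ)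
    (hf : ContDiffOn ℝ 1 f (Set.Ioi s_f))
    (hfpos : ∀ s, s_f < s → 0 < f s)
    (hfint : ∀ s, s_f < s → IntegrableOn (fun τ => 1 / f τ) (Set.Ioi s))
    (hg : ContDiffOn ℝ 1 g (Set.Ioi s_g))
    (hgpos : ∀ s, s_g < s → 0 < g s)
    (hgint : ∀ s, s_g < s → IntegrableOn (fun τ => 1 / g τ) (Set.Ioi s))
    (ha : 0 < a) (hab : a < b)
    (hvrange : ∀ r ∈ Set.Ioo a b, s_g < v r)
    (hvdiff : ∀ r ∈ Set.Ioo a b, DifferentiableAt ℝ v r ∧ DifferentiableAt ℝ (deriv v) r)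
    (hvode : ∀ r ∈ Set.Ioo a b,
      deriv (deriv v) r + deriv v r / r + g (v r) = 0)
    (hurange : ∀ r ∈ Set.Ioo a b, s_f < u r)
    (hudiff : ∀ r ∈ Set.Ioo a b, DifferentiableAt ℝ u r ∧ DifferentiableAt ℝ (deriv u) r)
    (huF : ∀ r ∈ Set.Ioo a b, Fint f (u r) = Fint g (v r)) :
    ∀ r ∈ Set.Ioo a b,
      deriv (deriv u) r + deriv u r / r + f (u r)
        + (deriv u r) ^ 2 / (f (u r) * Fint f (u r))
          * (deriv g (v r) * Fint g (v r) - deriv f (u r) * Fint f (u r)) = 0 :=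
  stmt0_general s_f s_g a b f g v u hf hfpos hfint hg hgpos hgint hvrange hvdiff hvode hurange
    hudiff huF
end

section
/- Let q > 1. For all r ∈ (0,1), the function v(r) := (−2 log r)^{1/q} satisfies v''(r) + v'(r)/r + (4(q−1)/q²) · v(r)^{1−2q} · e^{v(r)^q} = 0, and the function w(r) := log(−2 log r) satisfies w''(r) + w'(r)/r + 4·e^{e^{w(r)} − 2 w(r)} = 0. -/
/-!
In two dimensions `log r` is harmonic, so for a profile `U(r) = φ(c log r)` the radial Laplacian
is a pure second derivative: `U'' + U'/r = c² φ''(c log r) / r²`. With `c = -2` and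
`s = -2 log r > 0` one has `e^s = r⁻²`, so both equations become identities in `s` alone:
for `φ(s) = s^{1/q}`, `4 φ''(s) = -(4(q-1)/q²) s^{1/q-2}` against `v^{1-2q} e^{v^q} = s^{1/q-2} r⁻²`;
for `φ = log`, `4 φ''(s) = -4/s²` against `e^{e^w - 2w} = e^s / s² = r⁻² / s²`.
-/

open Real Filter Topology

theorem radial_laplacian_comp_mul_log {φ φ' : ℝ → ℝ} {φ'' c r : ℝ} (hr : 0 < r)
    (hφ : ∀ᶠ s in 𝓝 (c * log r), HasDerivAt φ (φ' s) s)
    (hφ' : HasDerivAt φ' φ'' (c * log r)) :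
    deriv (deriv fun t => φ (c * log t)) r + deriv (fun t => φ (c * log t)) r / r
      = c ^ 2 * φ'' / r ^ 2 := by
  have hlog : ∀ {t : ℝ}, 0 < t → HasDerivAt (fun t => c * log t) (c * t⁻¹) t :=
    fun ht => (hasDerivAt_log ht.ne').const_mul c
  have hφ_near : ∀ᶠ t in 𝓝 r, 0 < t ∧ HasDerivAt φ (φ' (c * log t)) (c * log t) :=
    (eventually_gt_nhds hr).and ((hlog hr).continuousAt.eventually hφ)
  have hU' : deriv (fun t => φ (c * log t)) =ᶠ[𝓝 r] fun t => φ' (c * log t) * (c * t⁻¹) :=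
    hφ_near.mono fun t ⟨ht, hφt⟩ => (hφt.comp t (hlog ht)).deriv
  have hU'' : HasDerivAt (fun t => φ' (c * log t) * (c * t⁻¹))
      (φ'' * (c * r⁻¹) * (c * r⁻¹) + φ' (c * log r) * (c * -(r ^ 2)⁻¹)) r :=
    (hφ'.comp r (hlog hr)).mul ((hasDerivAt_inv hr.ne').const_mul c)
  rw [hU'.deriv_eq, hU''.deriv, hU'.eq_of_nhds]
  field_simp
  ring

theorem exp_neg_two_mul_log {r : ℝ} (hr : 0 < r) : exp (-2 * log r) = (r ^ 2)⁻¹ := by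
  rw [mul_comm, ← rpow_def_of_pos hr, rpow_neg hr.le, rpow_two]

theorem neg_two_mul_log_pos {r : ℝ} (hr : r ∈ Set.Ioo (0 : ℝ) 1) : 0 < -2 * log r := by
  linarith [log_neg hr.1 hr.2]

theorem rpow_neg_two_mul_log_solves_radial_eq {q r : ℝ} (hq : q ≠ 0)
    (hr : r ∈ Set.Ioo (0 : ℝ) 1) :
    deriv (deriv fun t : ℝ => (-2 * log t) ^ (1 / q)) r
        + deriv (fun t : ℝ => (-2 * log t) ^ (1 / q)) r / r
        + (4 * (q - 1) / q ^ 2) * ((-2 * log r) ^ (1 / q)) ^ (1 - 2 * q)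
          * exp (((-2 * log r) ^ (1 / q)) ^ q) = 0 := by
  have hs := neg_two_mul_log_pos hr
  have hφ : ∀ᶠ x in 𝓝 (-2 * log r),
      HasDerivAt (fun x => x ^ (1 / q)) (1 / q * x ^ (1 / q - 1)) x :=
    (eventually_gt_nhds hs).mono fun x hx => hasDerivAt_rpow_const (Or.inl hx.ne')
  have hφ' : HasDerivAt (fun x => 1 / q * x ^ (1 / q - 1))
      (1 / q * ((1 / q - 1) * (-2 * log r) ^ (1 / q - 1 - 1))) (-2 * log r) :=
    (hasDerivAt_rpow_const (Or.inl hs.ne')).const_mul _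
  rw [radial_laplacian_comp_mul_log hr.1 hφ hφ', ← rpow_mul hs.le, ← rpow_mul hs.le,
    one_div_mul_cancel hq, rpow_one, exp_neg_two_mul_log hr.1,
    show 1 / q * (1 - 2 * q) = 1 / q - 1 - 1 by field_simp; ring]
  field_simp
  ring

theorem log_neg_two_mul_log_solves_radial_eq {r : ℝ} (hr : r ∈ Set.Ioo (0 : ℝ) 1) :
    deriv (deriv fun t : ℝ => log (-2 * log t)) r
        + deriv (fun t : ℝ => log (-2 * log t)) r / r
        + 4 * exp (exp (log (-2 * log r)) - 2 * log (-2 * log r)) = 0 := by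
  have hs := neg_two_mul_log_pos hr
  have hφ : ∀ᶠ x in 𝓝 (-2 * log r), HasDerivAt log x⁻¹ x :=
    (eventually_gt_nhds hs).mono fun x hx => hasDerivAt_log hx.ne'
  rw [radial_laplacian_comp_mul_log hr.1 hφ (hasDerivAt_inv hs.ne'), exp_log hs, exp_sub,
    exp_neg_two_mul_log hr.1, two_mul, exp_add, exp_log hs]
  field_simp
  ring

/-- Explicit singular solutions of the model equations in two dimensions:
`v(r) = (−2 log r)^{1/q}` solves `v'' + v'/r + (4(q−1)/q²) v^{1−2q} e^{v^q} = 0`, and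
`w(r) = log(−2 log r)` solves `w'' + w'/r + 4 e^{e^w − 2w} = 0`, for `r ∈ (0,1)`. -/
theorem stmt1 (q : ℝ) (hq : 1 < q) :
    ∀ r ∈ Set.Ioo (0 : ℝ) 1,
      (deriv (deriv (fun t : ℝ => (-2 * Real.log t) ^ (1 / q))) r
        + deriv (fun t : ℝ => (-2 * Real.log t) ^ (1 / q)) r / r
        + (4 * (q - 1) / q ^ 2) * ((-2 * Real.log r) ^ (1 / q)) ^ (1 - 2 * q)
          * Real.exp (((-2 * Real.log r) ^ (1 / q)) ^ q) = 0)
      ∧ (deriv (deriv (fun t : ℝ => Real.log (-2 * Real.log t))) r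
        + deriv (fun t : ℝ => Real.log (-2 * Real.log t)) r / r
        + 4 * Real.exp (Real.exp (Real.log (-2 * Real.log r))
            - 2 * Real.log (-2 * Real.log r)) = 0) :=
  fun _ hr =>
    ⟨rpow_neg_two_mul_log_solves_radial_eq (zero_lt_one.trans hq).ne' hr,
      log_neg_two_mul_log_solves_radial_eq hr⟩
end

section
/- Let a satisfy the hypotheses (A). Then, with f(s) := e^{a(s)} and F(s) := ∫_s^∞ e^{−a(t)} dt: (i) ( F(s)·e^{a(s)} − a₁(s) − a₂(s) − a₃(s) ) / a₄(s) → 1 as s → ∞; (ii) there exist C > 0 and s₂ > 0 such that for all s ≥ s₂: | log F(s) + a(s) + log a'(s) | ≤ C · |a''(s)| / a'(s)². -/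
/-!
Integration by parts gives
`∫_s^∞ a_n' e^{-a} = a_{n+1}(s) e^{-a(s)} + ∫_s^∞ a_{n+1}' e^{-a}`, because `a_{n+1} a' = a_n'`;
starting from `a₁ a' = 1`, this yields `F = (a₁ + a₂ + a₃ + a₄) e^{-a} + R` with
`R(s) = ∫_s^∞ a₄' e^{-a}`. As `a₄' = a₅ a'` with `a₅ = o(a₄)`, and `a₃' = a₄ a'` is eventually
of one sign, `|R| ≤ ε ∫_s^∞ |a₃'| e^{-a} = ε |a₄(s) e^{-a(s)} + R|`, hence `R e^a = o(a₄)`: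
this is (i).
For (ii), `F e^a a' = 1 + O(a₂ a')` where `a₂ a' = a₁' = -a''/a'²` tends to `0`,
and `log (1 + y) = O(y)` as `y → 0`.
-/

open MeasureTheory Filter

/-- `aseq a n` is the function `a_{n+1}` of the paper: `a₁ = 1/a'` and
`a_{n+1} = a_n'/a'`, so `aseq a 0 = a₁, …, aseq a 4 = a₅`. -/
noncomputable def aseq (a : ℝ → ℝ) : ℕ → ℝ → ℝ
  | 0 => fun s => 1 / deriv a s
  | n + 1 => fun s => deriv (aseq a n) s / deriv a s

open Set Real Asymptotics Topology

theorem IsPreconnected.forall_pos_or_forall_neg {X : Type*} [TopologicalSpace X] {s : Set X}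
    {f : X → ℝ} (hs : IsPreconnected s) (hf : ContinuousOn f s) (hne : ∀ x ∈ s, f x ≠ 0) :
    (∀ x ∈ s, 0 < f x) ∨ (∀ x ∈ s, f x < 0) := by
  by_contra! h
  obtain ⟨⟨x, hx, hfx⟩, ⟨y, hy, hfy⟩⟩ := h
  obtain ⟨z, hz, hfz⟩ := hs.intermediate_value₂ hx hy hf continuousOn_const hfx hfy
  exact hne z hz hfz

theorem abs_setIntegral_le_mul_abs_setIntegral {α : Type*} [MeasurableSpace α] {μ : Measure α}
    {S : Set α} {f g : α → ℝ} {ε : ℝ} (hS : MeasurableSet S) (hf : IntegrableOn f S μ)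
    (hg : IntegrableOn g S μ) (hfg : ∀ x ∈ S, |f x| ≤ ε * |g x|)
    (hsign : (∀ x ∈ S, 0 ≤ g x) ∨ (∀ x ∈ S, g x ≤ 0)) :
    |∫ x in S, f x ∂μ| ≤ ε * |∫ x in S, g x ∂μ| := by
  have habs : ∫ x in S, |g x| ∂μ = |∫ x in S, g x ∂μ| := by
    rcases hsign with hpos | hneg
    · rw [setIntegral_congr_fun hS fun x hx => abs_of_nonneg (hpos x hx),
        abs_of_nonneg (setIntegral_nonneg hS hpos)]
    · rw [setIntegral_congr_fun hS fun x hx => abs_of_nonpos (hneg x hx), integral_neg,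
        abs_of_nonpos (setIntegral_nonpos hS hneg)]
  calc |∫ x in S, f x ∂μ| ≤ ∫ x in S, |f x| ∂μ := abs_integral_le_integral_abs
    _ ≤ ∫ x in S, ε * |g x| ∂μ := setIntegral_mono_on hf.abs (hg.abs.const_mul ε) hS hfg
    _ = ε * |∫ x in S, g x ∂μ| := by rw [integral_const_mul, habs]

theorem integrableOn_exp_neg_of_le_deriv {φ φ' : ℝ → ℝ} {s c : ℝ} (hc : 0 < c)
    (hφ : ∀ t ∈ Ici s, HasDerivAt φ (φ' t) t) (hφ' : ∀ t ∈ Ioi s, c ≤ φ' t) :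
    IntegrableOn (fun t => exp (-φ t)) (Ioi s) := by
  have hcont : ContinuousOn φ (Ici s) := fun t ht => (hφ t ht).continuousAt.continuousWithinAt
  have hgrowth : ∀ t ∈ Ici s, c * (t - s) ≤ φ t - φ s := by
    refine fun t ht => (convex_Ici s).mul_sub_le_image_sub_of_le_deriv hcont ?_ ?_ s
      self_mem_Ici t ht ht
    · exact fun x hx => (hφ x (interior_subset hx)).differentiableAt.differentiableWithinAt
    · intro x hx
      rw [interior_Ici] at hx
      rw [(hφ x (mem_Ici_of_Ioi hx)).deriv]
      exact hφ' x hx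
  refine Integrable.mono' (((exp_neg_integrableOn_Ioi s hc).const_mul (exp (c * s - φ s))))
    ((continuous_exp.comp_continuousOn (hcont.mono Ioi_subset_Ici_self).neg).aestronglyMeasurable
      measurableSet_Ioi) ?_
  filter_upwards [self_mem_ae_restrict measurableSet_Ioi] with t ht
  rw [norm_of_nonneg (exp_pos _).le, ← exp_add, exp_le_exp]
  linarith [hgrowth t (mem_Ici_of_Ioi ht)]

theorem integral_Ioi_mul_exp_neg_eq {u u' v φ φ' : ℝ → ℝ} {s : ℝ}
    (hu : ∀ t ∈ Ici s, HasDerivAt u (u' t) t) (hφ : ∀ t ∈ Ici s, HasDerivAt φ (φ' t) t)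
    (hv : ∀ t ∈ Ici s, u t * φ' t = v t)
    (hlim : Tendsto (fun t => u t * exp (-φ t)) atTop (𝓝 0))
    (hu' : IntegrableOn (fun t => u' t * exp (-φ t)) (Ioi s))
    (hv' : IntegrableOn (fun t => v t * exp (-φ t)) (Ioi s)) :
    ∫ t in Ioi s, v t * exp (-φ t) = u s * exp (-φ s) + ∫ t in Ioi s, u' t * exp (-φ t) := by
  have hderiv : ∀ t ∈ Ici s, HasDerivAt (fun t => u t * exp (-φ t))
      (u' t * exp (-φ t) - v t * exp (-φ t)) t := by
    intro t ht
    refine ((hu t ht).mul (hφ t ht).neg.exp).congr_deriv ?_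
    rw [← hv t ht, Pi.neg_apply]
    ring
  have := integral_Ioi_of_hasDerivAt_of_tendsto' hderiv (hu'.sub hv') hlim
  rw [integral_sub hu' hv'] at this
  linarith

theorem integrableOn_deriv_mul_exp_neg_of_abs {f φ : ℝ → ℝ} {s : ℝ} (hφ : ContinuousOn φ (Ioi s))
    (h : IntegrableOn (fun t => |deriv f t| * exp (-φ t)) (Ioi s)) :
    IntegrableOn (fun t => deriv f t * exp (-φ t)) (Ioi s) := by
  refine (integrable_norm_iff ?_).1 ?_
  · exact ((measurable_deriv f).aestronglyMeasurable).mul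
      ((continuous_exp.comp_continuousOn hφ.neg).aestronglyMeasurable measurableSet_Ioi)
  · simp only [norm_mul, norm_eq_abs, abs_of_pos (exp_pos _)]
    exact h

theorem exists_pos_forall_ge_abs_le_of_isBigO {f g : ℝ → ℝ} (h : f =O[atTop] g) :
    ∃ C > (0 : ℝ), ∃ s₀ > (0 : ℝ), ∀ s ≥ s₀, |f s| ≤ C * |g s| := by
  obtain ⟨C, hC, hfg⟩ := h.exists_pos
  obtain ⟨s₀, hs₀⟩ := eventually_atTop.1 (hfg.bound.and (eventually_gt_atTop 0))
  exact ⟨C, hC, s₀, (hs₀ s₀ le_rfl).2, fun s hs => (hs₀ s hs).1⟩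

section aseq

variable {a : ℝ → ℝ}

theorem aseq_zero_mul_deriv {s : ℝ} (h : deriv a s ≠ 0) : aseq a 0 s * deriv a s = 1 :=
  one_div_mul_cancel h

theorem aseq_succ_mul_deriv {n : ℕ} {s : ℝ} (h : deriv a s ≠ 0) :
    aseq a (n + 1) s * deriv a s = deriv (aseq a n) s :=
  div_mul_cancel₀ _ h

theorem aseq_one_mul_deriv {s : ℝ} (hd : DifferentiableAt ℝ (deriv a) s) (h : deriv a s ≠ 0) :
    aseq a 1 s * deriv a s = -(deriv (deriv a) s / deriv a s ^ 2) := by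
  rw [aseq_succ_mul_deriv h]
  have : HasDerivAt (fun t => (deriv a t)⁻¹) (-(deriv (deriv a) s) / deriv a s ^ 2) s :=
    hd.hasDerivAt.inv h
  simp only [aseq, one_div, this.deriv, neg_div]

theorem contDiffOn_aseq {U : Set ℝ} (hU : IsOpen U) (h0 : ∀ x ∈ U, deriv a x ≠ 0) :
    ∀ (n k : ℕ), ContDiffOn ℝ (k + n + 1 : ℕ) a U → ContDiffOn ℝ k (aseq a n) U
  | 0, k, ha => contDiffOn_const.div (ha.deriv_of_isOpen hU (by norm_cast)) h0
  | n + 1, k, ha => by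
    have hn : ContDiffOn ℝ (k + 1 : ℕ) (aseq a n) U :=
      contDiffOn_aseq hU h0 n (k + 1) (by convert ha using 2; omega)
    exact (hn.deriv_of_isOpen hU (by norm_cast)).div
      (ha.deriv_of_isOpen hU (by norm_cast; omega)) h0

theorem integral_exp_neg_eq_aseq_zero_add {S s : ℝ} (hs : S < s)
    (ha : DifferentiableOn ℝ a (Ioi S)) (ha0 : ∀ t ∈ Ioi S, deriv a t ≠ 0)
    (hu : DifferentiableOn ℝ (aseq a 0) (Ioi S))
    (hlim : Tendsto (fun t => aseq a 0 t * exp (-a t)) atTop (𝓝 0))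
    (hw : IntegrableOn (fun t => exp (-a t)) (Ioi s))
    (hu' : IntegrableOn (fun t => deriv (aseq a 0) t * exp (-a t)) (Ioi s)) :
    ∫ t in Ioi s, exp (-a t) =
      aseq a 0 s * exp (-a s) + ∫ t in Ioi s, deriv (aseq a 0) t * exp (-a t) := by
  have hIci : Ici s ⊆ Ioi S := Ici_subset_Ioi.2 hs
  simpa only [one_mul] using integral_Ioi_mul_exp_neg_eq (v := fun _ => 1)
    (fun t ht => (hu.differentiableAt (Ioi_mem_nhds (hIci ht))).hasDerivAt)
    (fun t ht => (ha.differentiableAt (Ioi_mem_nhds (hIci ht))).hasDerivAt)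
    (fun t ht => aseq_zero_mul_deriv (ha0 t (hIci ht))) hlim hu'
    (by simpa only [one_mul] using hw)

theorem integral_deriv_aseq_mul_exp_neg_eq {n : ℕ} {S s : ℝ} (hs : S < s)
    (ha : DifferentiableOn ℝ a (Ioi S)) (ha0 : ∀ t ∈ Ioi S, deriv a t ≠ 0)
    (hu : DifferentiableOn ℝ (aseq a (n + 1)) (Ioi S))
    (hlim : Tendsto (fun t => aseq a (n + 1) t * exp (-a t)) atTop (𝓝 0))
    (hv : IntegrableOn (fun t => deriv (aseq a n) t * exp (-a t)) (Ioi s))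
    (hu' : IntegrableOn (fun t => deriv (aseq a (n + 1)) t * exp (-a t)) (Ioi s)) :
    ∫ t in Ioi s, deriv (aseq a n) t * exp (-a t) =
      aseq a (n + 1) s * exp (-a s) + ∫ t in Ioi s, deriv (aseq a (n + 1)) t * exp (-a t) := by
  have hIci : Ici s ⊆ Ioi S := Ici_subset_Ioi.2 hs
  exact integral_Ioi_mul_exp_neg_eq
    (fun t ht => (hu.differentiableAt (Ioi_mem_nhds (hIci ht))).hasDerivAt)
    (fun t ht => (ha.differentiableAt (Ioi_mem_nhds (hIci ht))).hasDerivAt)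
    (fun t ht => aseq_succ_mul_deriv (ha0 t (hIci ht))) hlim hu' hv

theorem abs_integral_deriv_aseq_succ_le {n : ℕ} {s ε : ℝ} (hε : 0 ≤ ε)
    (ha' : ∀ t ∈ Ioi s, 0 < deriv a t)
    (hsign : (∀ t ∈ Ioi s, 0 < aseq a (n + 1) t) ∨ (∀ t ∈ Ioi s, aseq a (n + 1) t < 0))
    (hbound : ∀ t ∈ Ioi s, |aseq a (n + 2) t| ≤ ε * |aseq a (n + 1) t|)
    (hv : IntegrableOn (fun t => deriv (aseq a n) t * exp (-a t)) (Ioi s))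
    (hu' : IntegrableOn (fun t => deriv (aseq a (n + 1)) t * exp (-a t)) (Ioi s))
    (hparts : ∫ t in Ioi s, deriv (aseq a n) t * exp (-a t) =
      aseq a (n + 1) s * exp (-a s) + ∫ t in Ioi s, deriv (aseq a (n + 1)) t * exp (-a t)) :
    |∫ t in Ioi s, deriv (aseq a (n + 1)) t * exp (-a t)| ≤
      ε * (|aseq a (n + 1) s| * exp (-a s) +
        |∫ t in Ioi s, deriv (aseq a (n + 1)) t * exp (-a t)|) := by
  have hv_eq : ∀ t ∈ Ioi s, deriv (aseq a n) t * exp (-a t) =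
      aseq a (n + 1) t * (deriv a t * exp (-a t)) := fun t ht => by
    rw [← aseq_succ_mul_deriv (ha' t ht).ne', mul_assoc]
  have hu_eq : ∀ t ∈ Ioi s, |deriv (aseq a (n + 1)) t * exp (-a t)| =
      |aseq a (n + 2) t| * (deriv a t * exp (-a t)) := fun t ht => by
    rw [← aseq_succ_mul_deriv (ha' t ht).ne', mul_assoc, abs_mul,
      abs_of_pos (mul_pos (ha' t ht) (exp_pos _))]
  have key := abs_setIntegral_le_mul_abs_setIntegral measurableSet_Ioi hu' hv
    (fun t ht => by
      rw [hu_eq t ht, hv_eq t ht, abs_mul, abs_of_pos (mul_pos (ha' t ht) (exp_pos _))]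
      exact (mul_le_mul_of_nonneg_right (hbound t ht)
        (mul_pos (ha' t ht) (exp_pos _)).le).trans_eq (mul_assoc _ _ _))
    (hsign.imp
      (fun h t ht => hv_eq t ht ▸ (mul_pos (h t ht) (mul_pos (ha' t ht) (exp_pos _))).le)
      (fun h t ht => hv_eq t ht ▸ (mul_neg_of_neg_of_pos (h t ht)
        (mul_pos (ha' t ht) (exp_pos _))).le))
  refine key.trans (mul_le_mul_of_nonneg_left ?_ hε)
  rw [hparts]
  refine (abs_add_le _ _).trans_eq ?_
  rw [abs_mul, abs_of_pos (exp_pos _)]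

theorem isLittleO_integral_deriv_aseq_mul_exp_neg {n : ℕ} {S : ℝ}
    (ha' : ∀ t ∈ Ioi S, 0 < deriv a t)
    (hcont : ContinuousOn (aseq a (n + 1)) (Ioi S)) (hne : ∀ t ∈ Ioi S, aseq a (n + 1) t ≠ 0)
    (hv : ∀ s > S, IntegrableOn (fun t => deriv (aseq a n) t * exp (-a t)) (Ioi s))
    (hu' : ∀ s > S, IntegrableOn (fun t => deriv (aseq a (n + 1)) t * exp (-a t)) (Ioi s))
    (hparts : ∀ s > S, ∫ t in Ioi s, deriv (aseq a n) t * exp (-a t) =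
      aseq a (n + 1) s * exp (-a s) + ∫ t in Ioi s, deriv (aseq a (n + 1)) t * exp (-a t))
    (hlo : aseq a (n + 2) =o[atTop] aseq a (n + 1)) :
    (fun s => (∫ t in Ioi s, deriv (aseq a (n + 1)) t * exp (-a t)) * exp (a s))
      =o[atTop] aseq a (n + 1) := by
  have hsign := isPreconnected_Ioi.forall_pos_or_forall_neg hcont hne
  rw [isLittleO_iff]
  intro c hc
  set ε := min (c / 2) (1 / 2)
  have hε : 0 < ε := lt_min (half_pos hc) one_half_pos
  filter_upwards [eventually_gt_atTop S, eventually_forall_ge_atTop.2 ((isLittleO_iff.1 hlo) hε)]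
    with s hs hbound
  have hsub : Ioi s ⊆ Ioi S := Ioi_subset_Ioi hs.le
  have h := abs_integral_deriv_aseq_succ_le hε.le (fun t ht => ha' t (hsub ht))
    (hsign.imp (fun h t ht => h t (hsub ht)) (fun h t ht => h t (hsub ht)))
    (fun t ht => hbound t ht.le) (hv s hs) (hu' s hs) (hparts s hs)
  set I := ∫ t in Ioi s, deriv (aseq a (n + 1)) t * exp (-a t)
  have hI : |I| ≤ c * |aseq a (n + 1) s| * exp (-a s) := by
    have : 0 ≤ |aseq a (n + 1) s| * exp (-a s) := by positivity
    nlinarith [min_le_left (c / 2) (1 / 2), min_le_right (c / 2) (1 / 2), abs_nonneg I]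
  calc ‖I * exp (a s)‖ = |I| * exp (a s) := by
        rw [norm_mul, norm_of_nonneg (exp_pos _).le, norm_eq_abs]
    _ ≤ c * |aseq a (n + 1) s| * exp (-a s) * exp (a s) :=
      mul_le_mul_of_nonneg_right hI (exp_pos _).le
    _ = c * ‖aseq a (n + 1) s‖ := by
      rw [mul_assoc, ← exp_add, neg_add_cancel, exp_zero, mul_one, norm_eq_abs]

theorem isEquivalent_integral_exp_neg_mul_exp_sub_aseq (ha : ContDiffOn ℝ 5 a (Ioi 0))
    (ha'top : Tendsto (deriv a) atTop atTop)
    (hdecay : ∀ n < 4, Tendsto (fun s => aseq a n s * exp (-a s)) atTop (𝓝 0))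
    (hint : ∀ n < 4, ∀ s > (0 : ℝ),
      IntegrableOn (fun t => |deriv (aseq a n) t| * exp (-a t)) (Ioi s))
    (hne : ∀ᶠ s in atTop, aseq a 3 s ≠ 0) (hlo : aseq a 4 =o[atTop] aseq a 3) :
    (fun s => (∫ t in Ioi s, exp (-a t)) * exp (a s) - aseq a 0 s - aseq a 1 s - aseq a 2 s)
      ~[atTop] aseq a 3 := by
  obtain ⟨S, hS⟩ := eventually_atTop.1
    ((eventually_gt_atTop 0).and ((ha'top.eventually_ge_atTop 1).and hne))
  have hS0 : Ioi S ⊆ Ioi 0 := fun t ht => (hS t (le_of_lt ht)).1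
  have ha' : ∀ t ∈ Ioi S, 1 ≤ deriv a t := fun t ht => (hS t (le_of_lt ht)).2.1
  have ha0 : ∀ t ∈ Ioi S, deriv a t ≠ 0 := fun t ht => (one_pos.trans_le (ha' t ht)).ne'
  have haS : ContDiffOn ℝ 5 a (Ioi S) := ha.mono hS0
  have hdiff : DifferentiableOn ℝ a (Ioi S) := haS.differentiableOn (by norm_num)
  have hdiffn : ∀ n ≤ 3, DifferentiableOn ℝ (aseq a n) (Ioi S) := fun n hn =>
    (contDiffOn_aseq isOpen_Ioi ha0 n 1 (haS.of_le (by norm_cast; omega))).differentiableOn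
      one_ne_zero
  have hintS : ∀ n < 4, ∀ s > S,
      IntegrableOn (fun t => deriv (aseq a n) t * exp (-a t)) (Ioi s) := fun n hn s hs =>
    integrableOn_deriv_mul_exp_neg_of_abs (hdiff.continuousOn.mono (Ioi_subset_Ioi hs.le))
      (hint n hn s (hS0 hs))
  have hparts : ∀ n < 3, ∀ s > S, ∫ t in Ioi s, deriv (aseq a n) t * exp (-a t) =
      aseq a (n + 1) s * exp (-a s) + ∫ t in Ioi s, deriv (aseq a (n + 1)) t * exp (-a t) :=
    fun n hn s hs => integral_deriv_aseq_mul_exp_neg_eq hs hdiff ha0 (hdiffn (n + 1) (by omega))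
      (hdecay (n + 1) (by omega)) (hintS n (by omega) s hs) (hintS (n + 1) (by omega) s hs)
  have hF : ∀ s > S, ∫ t in Ioi s, exp (-a t) =
      aseq a 0 s * exp (-a s) + ∫ t in Ioi s, deriv (aseq a 0) t * exp (-a t) :=
    fun s hs => integral_exp_neg_eq_aseq_zero_add hs hdiff ha0 (hdiffn 0 (by omega))
      (hdecay 0 (by omega))
      (integrableOn_exp_neg_of_le_deriv one_pos
        (fun t ht => (hdiff.differentiableAt (Ioi_mem_nhds (hs.trans_le ht))).hasDerivAt)
        (fun t ht => ha' t (hs.trans ht)))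
      (hintS 0 (by omega) s hs)
  have hrem := isLittleO_integral_deriv_aseq_mul_exp_neg (n := 2)
    (fun t ht => one_pos.trans_le (ha' t ht)) (hdiffn 3 le_rfl).continuousOn
    (fun t ht => (hS t (le_of_lt ht)).2.2) (hintS 2 (by omega)) (hintS 3 (by omega))
    (hparts 2 (by omega)) hlo
  refine hrem.congr' ?_ EventuallyEq.rfl
  filter_upwards [eventually_gt_atTop S] with s hs
  simp only [Pi.sub_apply]
  rw [hF s hs, hparts 0 (by omega) s hs, hparts 1 (by omega) s hs, hparts 2 (by omega) s hs]
  have : exp (-a s) * exp (a s) = 1 := by rw [← exp_add, neg_add_cancel, exp_zero]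
  linear_combination -(aseq a 0 s + aseq a 1 s + aseq a 2 s + aseq a 3 s) * this

theorem isBigO_log_add_add_log_deriv {F : ℝ → ℝ}
    (hF : (fun s => F s * exp (a s) - aseq a 0 s) =O[atTop] aseq a 1)
    (h10 : Tendsto (fun s => aseq a 1 s / aseq a 0 s) atTop (𝓝 0))
    (ha' : ∀ᶠ s in atTop, 0 < deriv a s)
    (ha'' : ∀ᶠ s in atTop, DifferentiableAt ℝ (deriv a) s) :
    (fun s => log (F s) + a s + log (deriv a s)) =O[atTop]
      fun s => deriv (deriv a) s / deriv a s ^ 2 := by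
  set X := fun s => F s * exp (a s) * deriv a s
  have hX : (fun s => X s - 1) =O[atTop] fun s => aseq a 1 s * deriv a s := by
    refine (hF.mul (isBigO_refl (deriv a) atTop)).congr' ?_ EventuallyEq.rfl
    filter_upwards [ha'] with s hs
    rw [sub_mul, aseq_zero_mul_deriv hs.ne']
  have hX1 : Tendsto X atTop (𝓝 1) := by
    have h : Tendsto (fun s => aseq a 1 s * deriv a s) atTop (𝓝 0) := by
      simpa only [aseq, div_div_eq_mul_div, div_one] using h10
    simpa using (hX.trans_tendsto h).add_const 1
  have hlog : (fun s => log (X s)) =O[atTop] fun s => X s - 1 := by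
    simpa only [log_one, sub_zero, Function.comp_def] using
      (hasDerivAt_log one_ne_zero).isBigO_sub.comp_tendsto hX1
  have hX' : (fun s => X s - 1) =O[atTop] fun s => deriv (deriv a) s / deriv a s ^ 2 := by
    refine isBigO_neg_right.1 (hX.congr' EventuallyEq.rfl ?_)
    filter_upwards [ha', ha''] with s hs hs'
    exact aseq_one_mul_deriv hs' hs.ne'
  refine (hlog.trans hX').congr' ?_ EventuallyEq.rfl
  filter_upwards [hX1.eventually_ne one_ne_zero, ha'] with s hXs hs
  have hFs : F s ≠ 0 := fun h => hXs (by simp [X, h])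
  rw [log_mul (mul_ne_zero hFs (exp_pos _).ne') hs.ne', log_mul hFs (exp_pos _).ne', log_exp]

end aseq

theorem stmt12_general (a : ℝ → ℝ)
    (ha : ContDiffOn ℝ 5 a (Set.Ioi 0))
    (ha'top : Tendsto (deriv a) atTop atTop)
    (hdecay : ∀ n < 4, Tendsto (fun s => aseq a n s * Real.exp (-(a s))) atTop (nhds 0))
    (hint : ∀ n < 4, ∀ s > (0 : ℝ),
      IntegrableOn (fun t => |deriv (aseq a n) t| * Real.exp (-(a t))) (Set.Ioi s))
    (hne : ∀ n < 4, ∃ s₁ > (0 : ℝ), ∀ s ≥ s₁, aseq a n s ≠ 0)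
    (hratio : ∀ n < 4, Tendsto (fun s => aseq a (n + 1) s / aseq a n s) atTop (nhds 0)) :
    Tendsto (fun s => ((∫ t in Set.Ioi s, Real.exp (-(a t))) * Real.exp (a s)
        - aseq a 0 s - aseq a 1 s - aseq a 2 s) / aseq a 3 s) atTop (nhds 1)
    ∧ ∃ C > (0 : ℝ), ∃ s₂ > (0 : ℝ), ∀ s ≥ s₂,
        |Real.log (∫ t in Set.Ioi s, Real.exp (-(a t))) + a s + Real.log (deriv a s)|
          ≤ C * |deriv (deriv a) s| / (deriv a s) ^ 2 := by
  have hne' : ∀ n < 4, ∀ᶠ s in atTop, aseq a n s ≠ 0 := fun n hn =>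
    let ⟨s₁, _, hs₁⟩ := hne n hn
    eventually_atTop.2 ⟨s₁, hs₁⟩
  have hlo : ∀ n < 4, aseq a (n + 1) =o[atTop] aseq a n := fun n hn =>
    (isLittleO_iff_tendsto' ((hne' n hn).mono fun s hs h => absurd h hs)).2 (hratio n hn)
  have hequiv := isEquivalent_integral_exp_neg_mul_exp_sub_aseq ha ha'top hdecay hint
    (hne' 3 (by norm_num)) (hlo 3 (by norm_num))
  refine ⟨(isEquivalent_iff_tendsto_one (hne' 3 (by norm_num))).1 hequiv, ?_⟩
  have hF : (fun s => (∫ t in Ioi s, exp (-a t)) * exp (a s) - aseq a 0 s) =O[atTop] aseq a 1 :=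
    ((hequiv.isBigO.trans ((hlo 2 (by norm_num)).trans (hlo 1 (by norm_num))).isBigO).add
      ((hlo 1 (by norm_num)).isBigO.add (isBigO_refl _ _))).congr_left fun s => by ring
  have ha'' : ∀ᶠ s in atTop, DifferentiableAt ℝ (deriv a) s := by
    filter_upwards [eventually_gt_atTop 0] with s hs
    exact ((ha.deriv_of_isOpen isOpen_Ioi (m := 1) (by norm_num)).differentiableOn one_ne_zero
      |>.differentiableAt (Ioi_mem_nhds hs))
  obtain ⟨C, hC, s₂, hs₂, hbound⟩ := exists_pos_forall_ge_abs_le_of_isBigO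
    (isBigO_log_add_add_log_deriv hF (hratio 0 (by norm_num)) (ha'top.eventually_gt_atTop 0) ha'')
  refine ⟨C, hC, s₂, hs₂, fun s hs => (hbound s hs).trans_eq ?_⟩
  rw [abs_div, abs_pow, sq_abs, mul_div_assoc]

/-- Lemma 3.1, parts (3.2) and (3.5c): asymptotic expansion of
`F(s) = ∫_s^∞ e^{−a(t)} dt` and of `log F(s)` under hypotheses (A). -/
theorem stmt12 (a : ℝ → ℝ)
    (ha : ContDiffOn ℝ 5 a (Set.Ioi 0))
    (hatop : Tendsto a atTop atTop)
    (ha'top : Tendsto (deriv a) atTop atTop)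
    (hdecay : ∀ n < 4, Tendsto (fun s => aseq a n s * Real.exp (-(a s))) atTop (nhds 0))
    (hint : ∀ n < 4, ∀ s > (0 : ℝ),
      IntegrableOn (fun t => |deriv (aseq a n) t| * Real.exp (-(a t))) (Set.Ioi s))
    (hne : ∀ n < 4, ∃ s₁ > (0 : ℝ), ∀ s ≥ s₁, aseq a n s ≠ 0)
    (hratio : ∀ n < 4, Tendsto (fun s => aseq a (n + 1) s / aseq a n s) atTop (nhds 0)) :
    Tendsto (fun s => ((∫ t in Set.Ioi s, Real.exp (-(a t))) * Real.exp (a s)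
        - aseq a 0 s - aseq a 1 s - aseq a 2 s) / aseq a 3 s) atTop (nhds 1)
    ∧ ∃ C > (0 : ℝ), ∃ s₂ > (0 : ℝ), ∀ s ≥ s₂,
        |Real.log (∫ t in Set.Ioi s, Real.exp (-(a t))) + a s + Real.log (deriv a s)|
          ≤ C * |deriv (deriv a) s| / (deriv a s) ^ 2 :=
  stmt12_general a ha ha'top hdecay hint hne hratio
end

section
/- Let a satisfy the hypotheses (A). Then, with f(s) := e^{a(s)} and F(s) := ∫_s^∞ e^{−a(t)} dt: (i) ( f'(s)·F(s) − 1 + a''(s)/a'(s)² ) · a'(s)⁴ / ( 3·a''(s)² − a'(s)·a'''(s) ) → 1 as s → ∞; (ii) there exist C > 0 and s₂ > 0 such that for all s ≥ s₂: | f(s)·f''(s)·F(s)/f'(s) − 1 − ( 2·a''(s)² − a'(s)·a'''(s) ) / a'(s)⁴ | ≤ C · ( |a''(s)·a'''(s)|/a'(s)⁵ + |a''''(s)|/a'(s)⁴ + |a''(s)|³/a'(s)⁶ ). -/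
/-!
Write `F(s) = ∫_s^∞ e^{-a}`. Since `a_n' = a' a_{n+1}`, integrating
`a_n' e^{-a} = a_{n+1} (a' e^{-a})` by parts gives
`∫_s^∞ a_n' e^{-a} = a_{n+1}(s) e^{-a(s)} + ∫_s^∞ a_{n+1}' e^{-a}`; starting from
`e^{-a} = a₁ a' e^{-a}` this yields `e^{a(s)} F(s) = a₁ + a₂ + a₃ + a₄ + e^{a(s)} R(s)` with
`R(s) = ∫_s^∞ a₄' e^{-a}`. Eventually `a₃' = a' a₄` has constant sign and `|a₅| ≤ ε |a₄|`, so
`|R(s)| ≤ ε |∫_s^∞ a₃' e^{-a}| = ε |a₄(s) e^{-a(s)} + R(s)|`, whence `e^{a} R = o(a₄)`.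
Multiplying by `f' = a' e^{a}` gives `f' F - 1 + a''/a'² = a' (a₃ + a₄ + e^{a} R)` with
`a' a₃ = (3a''² - a'a''')/a'⁴` and `a₄ = o(a₃)`, which is (i); (ii) follows from the same
expansion, `a' a₄ = (10a'a''a''' - a'²a'''' - 15a''³)/a'⁶` and `f f''/f' = f' (1 + a''/a'²)`.
-/

open MeasureTheory Filter Set Real Asymptotics Topology

theorem ContDiffOn.hasDerivAt_deriv {f : ℝ → ℝ} {U : Set ℝ} {n : WithTop ℕ∞}
    (hf : ContDiffOn ℝ n f U) (hU : IsOpen U) (hn : 1 ≤ n) {s : ℝ} (hs : s ∈ U) :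
    HasDerivAt f (deriv f s) s :=
  (hf.differentiableOn (by positivity)).hasDerivAt (hU.mem_nhds hs)

section aseq

variable {a : ℝ → ℝ} {U : Set ℝ}

theorem aseq_succ_apply (n : ℕ) (s : ℝ) :
    aseq a (n + 1) s = deriv (aseq a n) s / deriv a s := rfl

theorem deriv_aseq_eq_mul (n : ℕ) {s : ℝ} (hs : deriv a s ≠ 0) :
    deriv (aseq a n) s = deriv a s * aseq a (n + 1) s := by
  rw [aseq_succ_apply, mul_div_cancel₀ _ hs]

theorem contDiffOn_aseq_s13 (hU : IsOpen U) {m : ℕ} (ha : ContDiffOn ℝ (m + 1) a U)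
    (ha' : ∀ t ∈ U, deriv a t ≠ 0) {n k : ℕ} (hnk : n + k ≤ m) :
    ContDiffOn ℝ k (aseq a n) U := by
  have hda : ContDiffOn ℝ m (deriv a) U := ha.deriv_of_isOpen hU le_rfl
  induction n generalizing k with
  | zero => exact contDiffOn_const.div (hda.of_le (by exact_mod_cast (by omega : k ≤ m))) ha'
  | succ n ih =>
    exact ((ih (k := k + 1) (by omega)).deriv_of_isOpen hU (by norm_cast)).div
      (hda.of_le (by exact_mod_cast (by omega : k ≤ m))) ha'

theorem hasDerivAt_aseq_succ (hU : IsOpen U) (ha : ContDiffOn ℝ 2 a U)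
    (ha' : ∀ t ∈ U, deriv a t ≠ 0) {n : ℕ} {p : ℝ → ℝ} (hp : EqOn (deriv (aseq a n)) p U)
    {p' s : ℝ} (hp' : HasDerivAt p p' s) (hs : s ∈ U) :
    HasDerivAt (aseq a (n + 1))
      ((p' * deriv a s - p s * deriv (deriv a) s) / deriv a s ^ 2) s := by
  have ha'' := (ha.deriv_of_isOpen hU (m := 1) (by norm_num)).hasDerivAt_deriv hU le_rfl hs
  refine (hp'.div ha'' (ha' s hs)).congr_of_eventuallyEq ?_
  filter_upwards [hU.mem_nhds hs] with t ht
  simp only [aseq_succ_apply, hp ht, Pi.div_apply]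

theorem deriv_aseq_zero (hU : IsOpen U) (ha : ContDiffOn ℝ 2 a U)
    (ha' : ∀ t ∈ U, deriv a t ≠ 0) {s : ℝ} (hs : s ∈ U) :
    deriv (aseq a 0) s = -deriv (deriv a) s / deriv a s ^ 2 := by
  have ha'' := (ha.deriv_of_isOpen hU (m := 1) (by norm_num)).hasDerivAt_deriv hU le_rfl hs
  have h := (hasDerivAt_const s (1 : ℝ)).div ha'' (ha' s hs)
  rw [show aseq a 0 = (fun _ => (1 : ℝ)) / deriv a from rfl, h.deriv]
  ring

theorem aseq_one_eq (hU : IsOpen U) (ha : ContDiffOn ℝ 2 a U)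
    (ha' : ∀ t ∈ U, deriv a t ≠ 0) {s : ℝ} (hs : s ∈ U) :
    aseq a 1 s = -deriv (deriv a) s / deriv a s ^ 3 := by
  rw [aseq_succ_apply,
    deriv_aseq_zero hU ha ha' hs, div_div, ← pow_succ]

theorem deriv_aseq_one (hU : IsOpen U) (ha : ContDiffOn ℝ 3 a U)
    (ha' : ∀ t ∈ U, deriv a t ≠ 0) {s : ℝ} (hs : s ∈ U) :
    deriv (aseq a 1) s = (3 * deriv (deriv a) s ^ 2 - deriv a s * deriv (deriv (deriv a)) s)
      / deriv a s ^ 4 := by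
  have d1 := (ha.deriv_of_isOpen hU (m := 2) (by norm_num))
  have d2 := (d1.deriv_of_isOpen hU (m := 1) (by norm_num))
  have hp := (d2.hasDerivAt_deriv hU le_rfl hs).neg.div
    ((d1.hasDerivAt_deriv hU (by norm_num) hs).pow 2) (pow_ne_zero 2 (ha' s hs))
  rw [(hasDerivAt_aseq_succ hU (ha.of_le (by norm_num)) ha'
    (fun t ht => deriv_aseq_zero hU (ha.of_le (by norm_num)) ha' ht) hp hs).deriv]
  simp only [Pi.pow_apply, Pi.neg_apply]
  field_simp [ha' s hs]
  ring

theorem deriv_aseq_two (hU : IsOpen U) (ha : ContDiffOn ℝ 4 a U)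
    (ha' : ∀ t ∈ U, deriv a t ≠ 0) {s : ℝ} (hs : s ∈ U) :
    deriv (aseq a 2) s = (10 * deriv a s * deriv (deriv a) s * deriv (deriv (deriv a)) s
      - deriv a s ^ 2 * deriv (deriv (deriv (deriv a))) s - 15 * deriv (deriv a) s ^ 3)
      / deriv a s ^ 6 := by
  have d1 := (ha.deriv_of_isOpen hU (m := 3) (by norm_num))
  have d2 := (d1.deriv_of_isOpen hU (m := 2) (by norm_num))
  have d3 := (d2.deriv_of_isOpen hU (m := 1) (by norm_num))
  have h1 := d1.hasDerivAt_deriv hU (by norm_num) hs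
  have h2 := d2.hasDerivAt_deriv hU (by norm_num) hs
  have h3 := d3.hasDerivAt_deriv hU le_rfl hs
  have hp := (((h2.pow 2).const_mul 3).sub (h1.mul h3)).div (h1.pow 4) (pow_ne_zero 4 (ha' s hs))
  rw [(hasDerivAt_aseq_succ hU (ha.of_le (by norm_num)) ha'
    (fun t ht => deriv_aseq_one hU (ha.of_le (by norm_num)) ha' ht) hp hs).deriv]
  simp only [Pi.pow_apply, Pi.sub_apply, Pi.mul_apply]
  field_simp [ha' s hs]
  ring

theorem aseq_two_eq (hU : IsOpen U) (ha : ContDiffOn ℝ 3 a U)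
    (ha' : ∀ t ∈ U, deriv a t ≠ 0) {s : ℝ} (hs : s ∈ U) :
    aseq a 2 s = (3 * deriv (deriv a) s ^ 2 - deriv a s * deriv (deriv (deriv a)) s)
      / deriv a s ^ 5 := by
  rw [aseq_succ_apply,
    deriv_aseq_one hU ha ha' hs, div_div, ← pow_succ]

end aseq

section integrals

theorem abs_integral_eq_integral_abs_of_sign {α : Type*} [MeasurableSpace α] {μ : Measure α}
    {g : α → ℝ} (hsign : 0 ≤ᵐ[μ] g ∨ g ≤ᵐ[μ] 0) : |∫ x, g x ∂μ| = ∫ x, |g x| ∂μ := by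
  rcases hsign with hg | hg
  · rw [abs_of_nonneg (integral_nonneg_of_ae hg)]
    exact integral_congr_ae (hg.mono fun x hx => (abs_of_nonneg hx).symm)
  · rw [abs_of_nonpos (integral_nonpos_of_ae hg), ← integral_neg]
    exact integral_congr_ae (hg.mono fun x hx => (abs_of_nonpos hx).symm)

theorem abs_integral_le_mul_abs_integral {α : Type*} [MeasurableSpace α] {μ : Measure α}
    {f g : α → ℝ} {ε : ℝ} (hg : Integrable g μ) (hsign : 0 ≤ᵐ[μ] g ∨ g ≤ᵐ[μ] 0)
    (hfg : ∀ᵐ x ∂μ, |f x| ≤ ε * |g x|) : |∫ x, f x ∂μ| ≤ ε * |∫ x, g x ∂μ| := by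
  rw [abs_integral_eq_integral_abs_of_sign hsign, ← integral_const_mul]
  exact norm_integral_le_of_norm_le (f := f) (hg.abs.const_mul ε) hfg

variable {a : ℝ → ℝ}

theorem integral_Ioi_mul_exp_neg_eq_s13 {φ ψ : ℝ → ℝ} {s : ℝ}
    (ha : ∀ t ∈ Ici s, DifferentiableAt ℝ a t) (hφ : ∀ t ∈ Ici s, DifferentiableAt ℝ φ t)
    (hψ : ∀ t ∈ Ici s, φ t * deriv a t = ψ t)
    (hdecay : Tendsto (fun t => φ t * exp (-a t)) atTop (𝓝 0))
    (hψint : IntegrableOn (fun t => ψ t * exp (-a t)) (Ioi s))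
    (hφint : IntegrableOn (fun t => deriv φ t * exp (-a t)) (Ioi s)) :
    ∫ t in Ioi s, ψ t * exp (-a t) = φ s * exp (-a s) + ∫ t in Ioi s, deriv φ t * exp (-a t) := by
  have hderiv : ∀ t ∈ Ici s, HasDerivAt (fun t => φ t * exp (-a t))
      (deriv φ t * exp (-a t) - ψ t * exp (-a t)) t := by
    intro t ht
    refine ((hφ t ht).hasDerivAt.mul (ha t ht).hasDerivAt.neg.exp).congr_deriv ?_
    rw [← hψ t ht, Pi.neg_apply]
    ring
  have h := integral_Ioi_of_hasDerivAt_of_tendsto' hderiv (hφint.sub hψint) hdecay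
  rw [integral_sub hφint hψint] at h
  linarith

theorem integrableOn_exp_neg {s₀ : ℝ} (ha : ∀ t ∈ Ioi s₀, DifferentiableAt ℝ a t)
    (ha' : ∀ t ∈ Ioi s₀, 1 ≤ deriv a t) (hatop : Tendsto a atTop atTop) {s : ℝ} (hs : s₀ < s) :
    IntegrableOn (fun t => exp (-a t)) (Ioi s) := by
  have hIci : Ici s ⊆ Ioi s₀ := Ici_subset_Ioi.2 hs
  have hdom : IntegrableOn (fun t => deriv a t * exp (-a t)) (Ioi s) := by
    refine integrableOn_Ioi_deriv_of_nonneg' (g := fun t => -exp (-a t)) (l := 0) ?_ ?_ ?_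
    · intro t ht
      refine ((ha t (hIci ht)).hasDerivAt.neg.exp).neg.congr_deriv ?_
      rw [Pi.neg_apply]
      ring
    · exact fun t ht => mul_nonneg (zero_le_one.trans (ha' t (hIci (mem_Ici_of_Ioi ht))))
        (exp_pos _).le
    · simpa using (tendsto_exp_neg_atTop_nhds_zero.comp hatop).neg
  refine hdom.mono' ?_ ((ae_restrict_iff' measurableSet_Ioi).2 (ae_of_all _ fun t ht => ?_))
  · exact ContinuousOn.aestronglyMeasurable (fun t ht => (ha t (hIci (mem_Ici_of_Ioi ht))
      ).continuousAt.neg.rexp.continuousWithinAt) measurableSet_Ioi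
  · rw [norm_of_nonneg (exp_pos _).le]
    exact le_mul_of_one_le_left (exp_pos _).le (ha' t (hIci (mem_Ici_of_Ioi ht)))

theorem integrableOn_deriv_mul_exp_neg {f : ℝ → ℝ} {S : Set ℝ} (hS : MeasurableSet S)
    (ha : ContinuousOn a S) (hf : IntegrableOn (fun t => |deriv f t| * exp (-a t)) S) :
    IntegrableOn (fun t => deriv f t * exp (-a t)) S := by
  refine hf.mono' ((measurable_deriv f).aestronglyMeasurable.mul
    (ha.neg.rexp.aestronglyMeasurable hS)) (ae_of_all _ fun t => ?_)
  rw [norm_mul, norm_of_nonneg (exp_pos _).le, Real.norm_eq_abs]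

end integrals

theorem abs_le_two_mul_of_abs_le_mul_abs_add {x r ε : ℝ} (hε₀ : 0 ≤ ε) (hε : ε ≤ 1 / 2)
    (h : |r| ≤ ε * |x + r|) : |r| ≤ 2 * ε * |x| := by
  nlinarith [mul_le_mul_of_nonneg_left (abs_add_le x r) hε₀, abs_nonneg r]

section remainder

variable {a : ℝ → ℝ}

noncomputable def aseqRemainder (a : ℝ → ℝ) (n : ℕ) (s : ℝ) : ℝ :=
  ∫ t in Ioi s, deriv (aseq a n) t * exp (-a t)

theorem aseqRemainder_eq_add {s₀ : ℝ} {m n : ℕ} (ha : ContDiffOn ℝ (m + 1) a (Ioi s₀))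
    (hnm : n + 2 ≤ m) (ha' : ∀ t ∈ Ioi s₀, deriv a t ≠ 0)
    (hdecay : Tendsto (fun t => aseq a (n + 1) t * exp (-a t)) atTop (𝓝 0)) {s : ℝ}
    (hs : s₀ < s) (hint : IntegrableOn (fun t => deriv (aseq a n) t * exp (-a t)) (Ioi s))
    (hint' : IntegrableOn (fun t => deriv (aseq a (n + 1)) t * exp (-a t)) (Ioi s)) :
    aseqRemainder a n s = aseq a (n + 1) s * exp (-a s) + aseqRemainder a (n + 1) s := by
  have hsub : Ici s ⊆ Ioi s₀ := Ici_subset_Ioi.2 hs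
  refine integral_Ioi_mul_exp_neg_eq_s13
    (fun t ht => (ha.hasDerivAt_deriv isOpen_Ioi (by simp) (hsub ht)).differentiableAt)
    (fun t ht => ((contDiffOn_aseq_s13 isOpen_Ioi ha ha' (k := 1) hnm).hasDerivAt_deriv isOpen_Ioi
      le_rfl (hsub ht)).differentiableAt)
    (fun t ht => ?_) hdecay hint hint'
  rw [deriv_aseq_eq_mul n (ha' t (hsub ht)), mul_comm]

theorem integral_exp_neg_eq_sum_add_aseqRemainder {s₀ : ℝ} {m N : ℕ}
    (ha : ContDiffOn ℝ (m + 1) a (Ioi s₀)) (hNm : N + 1 ≤ m) (ha' : ∀ t ∈ Ioi s₀, 1 ≤ deriv a t)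
    (hatop : Tendsto a atTop atTop)
    (hdecay : ∀ n ≤ N, Tendsto (fun t => aseq a n t * exp (-a t)) atTop (𝓝 0)) {s : ℝ}
    (hs : s₀ < s)
    (hint : ∀ n ≤ N, IntegrableOn (fun t => deriv (aseq a n) t * exp (-a t)) (Ioi s)) :
    ∫ t in Ioi s, exp (-a t)
      = (∑ n ∈ Finset.range (N + 1), aseq a n s) * exp (-a s) + aseqRemainder a N s := by
  have ha'0 : ∀ t ∈ Ioi s₀, deriv a t ≠ 0 := fun t ht => (zero_lt_one.trans_le (ha' t ht)).ne'
  have hda : ∀ t ∈ Ioi s₀, DifferentiableAt ℝ a t :=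
    fun t ht => (ha.hasDerivAt_deriv isOpen_Ioi (by simp) ht).differentiableAt
  induction N with
  | zero =>
    have hsub : Ici s ⊆ Ioi s₀ := Ici_subset_Ioi.2 hs
    have h := integral_Ioi_mul_exp_neg_eq_s13 (φ := aseq a 0) (ψ := fun _ => 1)
      (fun t ht => hda t (hsub ht))
      (fun t ht => ((contDiffOn_aseq_s13 isOpen_Ioi ha ha'0 (k := 1) hNm).hasDerivAt_deriv isOpen_Ioi
        le_rfl (hsub ht)).differentiableAt)
      (fun t ht => one_div_mul_cancel (ha'0 t (hsub ht))) (hdecay 0 le_rfl)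
      (by simpa using integrableOn_exp_neg hda ha' hatop hs) (hint 0 le_rfl)
    simpa [aseqRemainder] using h
  | succ N ih =>
    rw [ih (by omega) (fun n hn => hdecay n (by omega)) (fun n hn => hint n (by omega)),
      aseqRemainder_eq_add ha (by omega) ha'0 (hdecay (N + 1) le_rfl) hs (hint N (by omega))
        (hint (N + 1) le_rfl), Finset.sum_range_succ _ (N + 1)]
    ring

theorem abs_aseqRemainder_succ_le {n : ℕ} {s ε : ℝ} (ha' : ∀ t ∈ Ioi s, 0 < deriv a t)
    (hint : IntegrableOn (fun t => deriv (aseq a n) t * exp (-a t)) (Ioi s))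
    (hsign : MapsTo (aseq a (n + 1)) (Ioi s) (Ioi 0) ∨ MapsTo (aseq a (n + 1)) (Ioi s) (Iio 0))
    (hratio : ∀ t ∈ Ioi s, |aseq a (n + 2) t| ≤ ε * |aseq a (n + 1) t|) :
    |aseqRemainder a (n + 1) s| ≤ ε * |aseqRemainder a n s| := by
  have hderiv : ∀ k, ∀ t ∈ Ioi s,
      deriv (aseq a k) t * exp (-a t) = deriv a t * exp (-a t) * aseq a (k + 1) t :=
    fun k t ht => by rw [deriv_aseq_eq_mul k (ha' t ht).ne']; ring
  have hweight : ∀ t ∈ Ioi s, 0 < deriv a t * exp (-a t) :=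
    fun t ht => mul_pos (ha' t ht) (exp_pos _)
  refine abs_integral_le_mul_abs_integral hint ?_ ?_
  · refine hsign.imp (fun h => ?_) (fun h => ?_) <;>
      refine (ae_restrict_iff' measurableSet_Ioi).2 (ae_of_all _ fun t ht => ?_) <;>
      simp only [hderiv n t ht, Pi.zero_apply]
    · exact (mul_pos (hweight t ht) (h ht)).le
    · exact (mul_neg_of_pos_of_neg (hweight t ht) (h ht)).le
  · refine (ae_restrict_iff' measurableSet_Ioi).2 (ae_of_all _ fun t ht => ?_)
    rw [hderiv (n + 1) t ht, hderiv n t ht, abs_mul (deriv a t * exp _),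
      abs_mul (deriv a t * exp _), abs_of_pos (hweight t ht), mul_left_comm]
    exact mul_le_mul_of_nonneg_left (hratio t ht) (hweight t ht).le

theorem isLittleO_exp_mul_aseqRemainder {s₀ : ℝ} {m n : ℕ}
    (ha : ContDiffOn ℝ (m + 1) a (Ioi s₀)) (hnm : n + 2 ≤ m) (ha' : ∀ t ∈ Ioi s₀, 0 < deriv a t)
    (hdecay : Tendsto (fun t => aseq a (n + 1) t * exp (-a t)) atTop (𝓝 0))
    (hint : ∀ s > s₀, IntegrableOn (fun t => deriv (aseq a n) t * exp (-a t)) (Ioi s))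
    (hint' : ∀ s > s₀, IntegrableOn (fun t => deriv (aseq a (n + 1)) t * exp (-a t)) (Ioi s))
    (hne : ∀ᶠ t in atTop, aseq a (n + 1) t ≠ 0)
    (hratio : aseq a (n + 2) =o[atTop] aseq a (n + 1)) :
    (fun s => exp (a s) * aseqRemainder a (n + 1) s) =o[atTop] aseq a (n + 1) := by
  have ha'0 : ∀ t ∈ Ioi s₀, deriv a t ≠ 0 := fun t ht => (ha' t ht).ne'
  obtain ⟨s₁, hs₁⟩ := eventually_atTop.1 hne
  set s₂ := max s₁ (s₀ + 1)
  have hsub : Ici s₂ ⊆ Ioi s₀ := Ici_subset_Ioi.2 (by simp [s₂])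
  have hsign := isPreconnected_Ici.mapsTo_Ioi_or_Iio
    ((contDiffOn_aseq_s13 isOpen_Ioi ha ha'0 (k := 0) (by omega)).continuousOn.mono hsub)
    (fun t ht => hs₁ t (le_of_max_le_left ht))
  refine IsLittleO.of_bound fun c hc => ?_
  set ε := min (c / 2) (1 / 2)
  have hε₀ : 0 < ε := by positivity
  obtain ⟨S, hS⟩ := eventually_atTop.1 (hratio.bound hε₀)
  filter_upwards [eventually_ge_atTop (max S s₂)] with s hs
  have hs₂ : Ioi s ⊆ Ici s₂ := Ioi_subset_Ici (le_of_max_le_right hs)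
  have hs₀ : s₀ < s := hsub (le_of_max_le_right hs)
  have hcmp := abs_aseqRemainder_succ_le (fun t ht => ha' t (hsub (hs₂ ht))) (hint s hs₀)
    (hsign.imp (·.mono_left hs₂) (·.mono_left hs₂))
    (fun t ht => hS t ((le_of_max_le_left hs).trans ht.le))
  rw [aseqRemainder_eq_add ha hnm ha'0 hdecay hs₀ (hint s hs₀) (hint' s hs₀)] at hcmp
  set R := aseqRemainder a (n + 1) s
  have hscale : aseq a (n + 1) s + exp (a s) * R
      = exp (a s) * (aseq a (n + 1) s * exp (-a s) + R) := by
    rw [mul_add, exp_neg]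
    field_simp
  have hnorm : |exp (a s) * R| ≤ ε * |aseq a (n + 1) s + exp (a s) * R| := by
    rw [hscale, abs_mul, abs_mul, abs_of_pos (exp_pos _), mul_left_comm]
    exact mul_le_mul_of_nonneg_left hcmp (exp_pos _).le
  calc ‖exp (a s) * R‖ ≤ 2 * ε * |aseq a (n + 1) s| :=
        abs_le_two_mul_of_abs_le_mul_abs_add hε₀.le (min_le_right _ _) hnorm
    _ ≤ c * ‖aseq a (n + 1) s‖ := by
        rw [Real.norm_eq_abs]
        gcongr
        linarith [min_le_left (c / 2) (1 / 2)]

end remainder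

section expansion

variable {a : ℝ → ℝ}

theorem deriv_deriv_exp_comp {U : Set ℝ} (hU : IsOpen U) (ha : ContDiffOn ℝ 2 a U) {s : ℝ}
    (hs : s ∈ U) :
    deriv (deriv (fun x => exp (a x))) s = exp (a s) * (deriv a s ^ 2 + deriv (deriv a) s) := by
  have hd : ∀ t ∈ U, HasDerivAt a (deriv a t) t :=
    fun t ht => ha.hasDerivAt_deriv hU (by norm_num) ht
  have hev : deriv (fun x => exp (a x)) =ᶠ[𝓝 s] fun t => exp (a t) * deriv a t := by
    filter_upwards [hU.mem_nhds hs] with t ht using deriv_exp (hd t ht).differentiableAt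
  have hprod : HasDerivAt (fun t => exp (a t) * deriv a t)
      (exp (a s) * deriv a s * deriv a s + exp (a s) * deriv (deriv a) s) s := (hd s hs).exp.mul
    ((ha.deriv_of_isOpen hU (m := 1) (by norm_num)).hasDerivAt_deriv hU le_rfl hs)
  rw [hev.deriv_eq, hprod.deriv]
  ring

theorem exp_mul_deriv_deriv_exp_mul_div_eq {s₀ s : ℝ} (ha : ContDiffOn ℝ 2 a (Ioi s₀))
    (ha' : ∀ t ∈ Ioi s₀, deriv a t ≠ 0) (hs : s₀ < s) (F : ℝ) :
    exp (a s) * deriv (deriv (fun x => exp (a x))) s * F / deriv (fun x => exp (a x)) s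
      = deriv (fun x => exp (a x)) s * F * (1 + deriv (deriv a) s / deriv a s ^ 2) := by
  rw [deriv_deriv_exp_comp isOpen_Ioi ha hs,
    deriv_exp (ha.hasDerivAt_deriv isOpen_Ioi (by norm_num) hs).differentiableAt]
  field_simp [ha' s hs]

theorem deriv_exp_mul_integral_exp_neg_eq {s₀ : ℝ} (ha : ContDiffOn ℝ 5 a (Ioi s₀))
    (ha' : ∀ t ∈ Ioi s₀, 1 ≤ deriv a t) (hatop : Tendsto a atTop atTop)
    (hdecay : ∀ n ≤ 3, Tendsto (fun t => aseq a n t * exp (-a t)) atTop (𝓝 0)) {s : ℝ}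
    (hs : s₀ < s)
    (hint : ∀ n ≤ 3, IntegrableOn (fun t => deriv (aseq a n) t * exp (-a t)) (Ioi s)) :
    deriv (fun x => exp (a x)) s * ∫ t in Ioi s, exp (-a t)
      = 1 - deriv (deriv a) s / deriv a s ^ 2
        + deriv a s * (aseq a 2 s + (aseq a 3 s + exp (a s) * aseqRemainder a 3 s)) := by
  have ha'0 : ∀ t ∈ Ioi s₀, deriv a t ≠ 0 := fun t ht => (zero_lt_one.trans_le (ha' t ht)).ne'
  have h0 : aseq a 0 s = 1 / deriv a s := rfl
  have h1 := aseq_one_eq isOpen_Ioi (ha.of_le (by norm_num)) ha'0 hs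
  rw [deriv_exp (ha.hasDerivAt_deriv isOpen_Ioi (by norm_num) hs).differentiableAt,
    integral_exp_neg_eq_sum_add_aseqRemainder (m := 4) (ha.of_le (by norm_num)) le_rfl ha'
      hatop hdecay hs hint]
  simp only [Finset.sum_range_succ, Finset.sum_range_zero, h0, h1, exp_neg]
  field_simp [ha'0 s hs]
  ring

end expansion

section algebra

theorem abs_expansion_error_le {u v r e : ℝ} (hu : |u| ≤ 1)
    (he : |e| ≤ |10 * u * v - r - 15 * u ^ 3|) :
    |(1 - u + (3 * u ^ 2 - v) + (10 * u * v - r - 15 * u ^ 3) + e) * (1 + u) - 1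
        - (2 * u ^ 2 - v)| ≤ 100 * (|u * v| + |r| + |u| ^ 3) := by
  set q := 10 * u * v - r - 15 * u ^ 3
  have hq : |q| ≤ 10 * |u * v| + |r| + 15 * |u| ^ 3 := by
    calc |q| ≤ |10 * (u * v)| + |r| + |15 * u ^ 3| := by
          rw [← mul_assoc]
          exact (abs_sub _ _).trans (by gcongr; exact abs_sub _ _)
      _ = 10 * |u * v| + |r| + 15 * |u| ^ 3 := by simp [abs_mul]
  have h1u : |1 + u| ≤ 2 := (abs_add_le 1 u).trans (by rw [abs_one]; linarith)
  have hid : (1 - u + (3 * u ^ 2 - v) + q + e) * (1 + u) - 1 - (2 * u ^ 2 - v)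
      = 3 * u ^ 3 - u * v + (1 + u) * (q + e) := by ring
  rw [hid]
  calc _ ≤ |3 * u ^ 3| + |u * v| + |1 + u| * |q + e| := by
        rw [← abs_mul]
        exact (abs_add_le _ _).trans (by gcongr; exact abs_sub _ _)
    _ ≤ 3 * |u| ^ 3 + |u * v| + 2 * (|q| + |q|) := by
        rw [abs_mul, abs_pow, abs_of_pos three_pos]
        gcongr
        exact (abs_add_le q e).trans (by gcongr)
    _ ≤ 100 * (|u * v| + |r| + |u| ^ 3) := by
        nlinarith [abs_nonneg (u * v), abs_nonneg r, pow_nonneg (abs_nonneg u) 3]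

theorem abs_expansion_error_le_of_pos {w x y z Q e : ℝ} (hw : 0 < w) (hu : |x / w ^ 2| ≤ 1)
    (hQ : Q = (10 * w * x * y - w ^ 2 * z - 15 * x ^ 3) / w ^ 6) (he : |e| ≤ |Q|) :
    |(1 - x / w ^ 2 + (3 * x ^ 2 - w * y) / w ^ 4 + Q + e) * (1 + x / w ^ 2) - 1
        - (2 * x ^ 2 - w * y) / w ^ 4|
      ≤ 100 * (|x * y| / w ^ 5 + |z| / w ^ 4 + |x| ^ 3 / w ^ 6) := by
  have hQ' : Q = 10 * (x / w ^ 2) * (y / w ^ 3) - z / w ^ 4 - 15 * (x / w ^ 2) ^ 3 := by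
    rw [hQ]; field_simp
  have hP : (3 * x ^ 2 - w * y) / w ^ 4 = 3 * (x / w ^ 2) ^ 2 - y / w ^ 3 := by
    field_simp
  have hT : (2 * x ^ 2 - w * y) / w ^ 4 = 2 * (x / w ^ 2) ^ 2 - y / w ^ 3 := by
    field_simp
  have hnorm : |x * y| / w ^ 5 + |z| / w ^ 4 + |x| ^ 3 / w ^ 6
      = |x / w ^ 2 * (y / w ^ 3)| + |z / w ^ 4| + |x / w ^ 2| ^ 3 := by
    simp only [abs_mul, abs_div, abs_pow, abs_of_pos hw]
    field_simp
  rw [hP, hT, hnorm, hQ']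
  rw [hQ'] at he
  exact abs_expansion_error_le hu he

theorem tendsto_expansion_ratio {w x y G b c : ℝ → ℝ}
    (hG : ∀ᶠ s in atTop, G s = 1 - x s / w s ^ 2 + w s * (b s + c s))
    (hb : ∀ᶠ s in atTop, b s = (3 * x s ^ 2 - w s * y s) / w s ^ 5)
    (hw : ∀ᶠ s in atTop, w s ≠ 0) (hb0 : ∀ᶠ s in atTop, b s ≠ 0) (hc : c =o[atTop] b) :
    Tendsto (fun s => (G s - 1 + x s / w s ^ 2) * w s ^ 4 / (3 * x s ^ 2 - w s * y s))
      atTop (𝓝 1) := by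
  have h := tendsto_const_nhds (x := (1 : ℝ)).add hc.tendsto_div_nhds_zero
  rw [add_zero] at h
  refine h.congr' ?_
  filter_upwards [hG, hb, hw, hb0] with s hG hb hw hb0
  have hN : 3 * x s ^ 2 - w s * y s ≠ 0 := fun h => hb0 (by rw [hb, h, zero_div])
  rw [hG, hb]
  field_simp
  ring

theorem exists_abs_sub_le_of_expansion {w x y z G H b q e : ℝ → ℝ}
    (hG : ∀ᶠ s in atTop, G s = 1 - x s / w s ^ 2 + w s * (b s + (q s + e s)))
    (hb : ∀ᶠ s in atTop, b s = (3 * x s ^ 2 - w s * y s) / w s ^ 5)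
    (hq : ∀ᶠ s in atTop,
      w s * q s = (10 * w s * x s * y s - w s ^ 2 * z s - 15 * x s ^ 3) / w s ^ 6)
    (hH : ∀ᶠ s in atTop, H s = G s * (1 + x s / w s ^ 2))
    (hw : ∀ᶠ s in atTop, 0 < w s) (hu : Tendsto (fun s => x s / w s ^ 2) atTop (𝓝 0))
    (he : ∀ᶠ s in atTop, |e s| ≤ |q s|) :
    ∃ C > (0 : ℝ), ∃ s₂ > (0 : ℝ), ∀ s ≥ s₂,
      |H s - 1 - (2 * x s ^ 2 - w s * y s) / w s ^ 4|
        ≤ C * (|x s * y s| / w s ^ 5 + |z s| / w s ^ 4 + |x s| ^ 3 / w s ^ 6) := by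
  have hbound : ∀ᶠ s in atTop, |H s - 1 - (2 * x s ^ 2 - w s * y s) / w s ^ 4|
      ≤ 100 * (|x s * y s| / w s ^ 5 + |z s| / w s ^ 4 + |x s| ^ 3 / w s ^ 6) := by
    filter_upwards [hG, hb, hq, hH, hw, hu.eventually (Metric.closedBall_mem_nhds 0 one_pos), he]
      with s hG hb hq hH hw hu he
    have hP : w s * b s = (3 * x s ^ 2 - w s * y s) / w s ^ 4 := by
      rw [hb]; field_simp
    have hwe : |w s * e s| ≤ |w s * q s| := by
      rw [abs_mul, abs_mul]; exact mul_le_mul_of_nonneg_left he (abs_nonneg _)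
    have hG' : G s = 1 - x s / w s ^ 2 + (3 * x s ^ 2 - w s * y s) / w s ^ 4
        + w s * q s + w s * e s := by
      rw [hG, ← hP]; ring
    rw [hH, hG']
    exact abs_expansion_error_le_of_pos hw (mem_closedBall_zero_iff.1 hu) hq hwe
  obtain ⟨s₂, hs₂⟩ := eventually_atTop.1 hbound
  exact ⟨100, by norm_num, max s₂ 1, by positivity, fun s hs => hs₂ s (le_of_max_le_left hs)⟩

end algebra

/-- Lemma 3.1, parts (3.7b) and (3.8b): asymptotic expansions of `f'(s)F(s)` and
of `f(s)f''(s)F(s)/f'(s)` for `f = e^a`, `F(s) = ∫_s^∞ e^{−a(t)} dt`, under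
hypotheses (A). -/
theorem stmt13 (a : ℝ → ℝ)
    (ha : ContDiffOn ℝ 5 a (Set.Ioi 0))
    (hatop : Tendsto a atTop atTop)
    (ha'top : Tendsto (deriv a) atTop atTop)
    (hdecay : ∀ n < 4, Tendsto (fun s => aseq a n s * Real.exp (-(a s))) atTop (nhds 0))
    (hint : ∀ n < 4, ∀ s > (0 : ℝ),
      IntegrableOn (fun t => |deriv (aseq a n) t| * Real.exp (-(a t))) (Set.Ioi s))
    (hne : ∀ n < 4, ∃ s₁ > (0 : ℝ), ∀ s ≥ s₁, aseq a n s ≠ 0)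
    (hratio : ∀ n < 4, Tendsto (fun s => aseq a (n + 1) s / aseq a n s) atTop (nhds 0)) :
    Tendsto (fun s =>
        (deriv (fun x => Real.exp (a x)) s * (∫ t in Set.Ioi s, Real.exp (-(a t))) - 1
            + deriv (deriv a) s / (deriv a s) ^ 2) * (deriv a s) ^ 4
          / (3 * (deriv (deriv a) s) ^ 2 - deriv a s * deriv (deriv (deriv a)) s))
      atTop (nhds 1)
    ∧ ∃ C > (0 : ℝ), ∃ s₂ > (0 : ℝ), ∀ s ≥ s₂,
        |Real.exp (a s) * deriv (deriv (fun x => Real.exp (a x))) s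
              * (∫ t in Set.Ioi s, Real.exp (-(a t))) / deriv (fun x => Real.exp (a x)) s
            - 1 - (2 * (deriv (deriv a) s) ^ 2 - deriv a s * deriv (deriv (deriv a)) s)
              / (deriv a s) ^ 4|
          ≤ C * (|deriv (deriv a) s * deriv (deriv (deriv a)) s| / (deriv a s) ^ 5
              + |deriv (deriv (deriv (deriv a))) s| / (deriv a s) ^ 4
              + |deriv (deriv a) s| ^ 3 / (deriv a s) ^ 6) := by
  have hne' : ∀ n < 4, ∀ᶠ s in atTop, aseq a n s ≠ 0 := fun n hn =>
    let ⟨s₁, _, hs₁⟩ := hne n hn; eventually_atTop.2 ⟨s₁, hs₁⟩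
  have hlo : ∀ n < 4, aseq a (n + 1) =o[atTop] aseq a n := fun n hn =>
    (isLittleO_iff_tendsto' ((hne' n hn).mono fun s hs h0 => absurd h0 hs)).2 (hratio n hn)
  obtain ⟨s₀, hs₀, ha'⟩ : ∃ s₀ > 0, ∀ t ∈ Ioi s₀, 1 ≤ deriv a t := by
    obtain ⟨M, hM⟩ := eventually_atTop.1 (ha'top.eventually_ge_atTop 1)
    exact ⟨max M 1, by positivity, fun t ht => hM t (le_of_max_le_left ht.le)⟩
  have ha₀ : ContDiffOn ℝ 5 a (Ioi s₀) := ha.mono (Ioi_subset_Ioi hs₀.le)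
  have ha'pos : ∀ t ∈ Ioi s₀, 0 < deriv a t := fun t ht => zero_lt_one.trans_le (ha' t ht)
  have ha'₀ : ∀ t ∈ Ioi s₀, deriv a t ≠ 0 := fun t ht => (ha'pos t ht).ne'
  have hint₀ : ∀ n < 4, ∀ s > s₀,
      IntegrableOn (fun t => deriv (aseq a n) t * exp (-a t)) (Ioi s) := fun n hn s hs =>
    integrableOn_deriv_mul_exp_neg measurableSet_Ioi
      (ha₀.continuousOn.mono (Ioi_subset_Ioi hs.le)) (hint n hn s (hs₀.trans hs))
  have hE : (fun s => exp (a s) * aseqRemainder a 3 s) =o[atTop] aseq a 3 :=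
    isLittleO_exp_mul_aseqRemainder (m := 4) (n := 2) (ha₀.of_le (by norm_num)) le_rfl ha'pos
      (hdecay 3 (by norm_num)) (hint₀ 2 (by norm_num)) (hint₀ 3 (by norm_num))
      (hne' 3 (by norm_num)) (hlo 3 (by norm_num))
  have hG := (eventually_gt_atTop s₀).mono fun s hs => deriv_exp_mul_integral_exp_neg_eq ha₀ ha'
    hatop (fun n hn => hdecay n (by omega)) hs (fun n hn => hint₀ n (by omega) s hs)
  have hb := (eventually_gt_atTop s₀).mono fun s hs =>
    aseq_two_eq isOpen_Ioi (ha₀.of_le (by norm_num)) ha'₀ hs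
  refine ⟨tendsto_expansion_ratio hG hb ((eventually_gt_atTop s₀).mono ha'₀)
    (hne' 2 (by norm_num)) ((hlo 2 (by norm_num)).add (hE.trans (hlo 2 (by norm_num)))), ?_⟩
  have hu : Tendsto (fun s => deriv (deriv a) s / deriv a s ^ 2) atTop (𝓝 0) := by
    refine (neg_zero (G := ℝ) ▸ (hratio 0 (by norm_num)).neg).congr'
      ((eventually_gt_atTop s₀).mono fun s hs => ?_)
    rw [aseq_one_eq isOpen_Ioi (ha₀.of_le (by norm_num)) ha'₀ hs,
      show aseq a 0 s = 1 / deriv a s from rfl]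
    field_simp [ha'₀ s hs]
  have hq := (eventually_gt_atTop s₀).mono fun s hs => (deriv_aseq_eq_mul 2 (ha'₀ s hs)).symm.trans
    (deriv_aseq_two isOpen_Ioi (ha₀.of_le (by norm_num)) ha'₀ hs)
  have hH := (eventually_gt_atTop s₀).mono fun s hs =>
    exp_mul_deriv_deriv_exp_mul_div_eq (ha₀.of_le (by norm_num)) ha'₀ hs (∫ t in Ioi s, exp (-a t))
  exact exists_abs_sub_le_of_expansion hG hb hq hH ((eventually_gt_atTop s₀).mono ha'pos) hu
    ((hE.bound one_pos).mono fun s hs => by simpa using hs)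
end
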